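/- arXiv:2605.13926 — 3 statements merged into one kernel-verified Lean document; each statement's English description precedes it below -/
import Mathlib

section
/- Let J be a finite index set, let s, b⋆ be real numbers, and let p, H : ℝ → ℝ and, for each j ∈ J, F_j, ψ_j : ℝ → ℝ. Assume p, H and each ψ_j are differentiable at b⋆, each F_j is differentiable at ψ_j(b⋆), and p(b⋆) > 0, H(b⋆) > 0, and F_j(ψ_j(b⋆)) > 0 for every j ∈ J. Define the selling probability q(b) = p(b) · H(b) · ∏_{j∈J} F_j(ψ_j(b)) and the expected utility U(b) = (s − b) · q(b). If b⋆ is a local maximum of U, then s ≠ b⋆ and the first-order condition holds: 1/(s − b⋆) = p′(b⋆)/p(b⋆) + H′(b⋆)/H(b⋆) + Σ_{j∈J} F_j′(ψ_j(b⋆)) · ψ_j′(b⋆) / F_j(ψ_j(b⋆)). -/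
/-!
At an interior maximum of `U b = (s - b) * q b` the derivative `-q b⋆ + (s - b⋆) q' b⋆` vanishes.
Since `q b⋆ > 0` this forces `s ≠ b⋆` and `1 / (s - b⋆) = q' b⋆ / q b⋆`, the logarithmic derivative
of `q`. For `q = p · H · ∏ⱼ Fⱼ ∘ ψⱼ` this is the sum of the logarithmic derivatives of the
factors, each rival's term carrying the chain-rule factor `ψⱼ'`.
-/

open Finset

theorem IsLocalMax.ne_and_one_div_sub_eq_logDeriv {q : ℝ → ℝ} {s x : ℝ}
    (hq : DifferentiableAt ℝ q x) (hq0 : q x ≠ 0)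
    (hmax : IsLocalMax (fun b => (s - b) * q b) x) :
    s ≠ x ∧ 1 / (s - x) = logDeriv q x := by
  have hU : HasDerivAt (fun b => (s - b) * q b) (-1 * q x + (s - x) * deriv q x) x :=
    ((hasDerivAt_id x).const_sub s).mul hq.hasDerivAt
  have hfoc : -1 * q x + (s - x) * deriv q x = 0 := hU.deriv ▸ hmax.deriv_eq_zero
  have hsx : s - x ≠ 0 := by
    rintro hsx
    rw [hsx, zero_mul, add_zero, neg_one_mul, neg_eq_zero] at hfoc
    exact hq0 hfoc
  refine ⟨sub_ne_zero.mp hsx, ?_⟩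
  rw [logDeriv_apply, div_eq_div_iff hsx hq0]
  linear_combination -hfoc

theorem logDeriv_mul_mul_prod_comp {𝕜 ι : Type*} [NontriviallyNormedField 𝕜]
    {J : Finset ι} {x : 𝕜} {p H : 𝕜 → 𝕜} {F ψ : ι → 𝕜 → 𝕜}
    (hp : DifferentiableAt 𝕜 p x) (hH : DifferentiableAt 𝕜 H x)
    (hψ : ∀ j ∈ J, DifferentiableAt 𝕜 (ψ j) x)
    (hF : ∀ j ∈ J, DifferentiableAt 𝕜 (F j) (ψ j x))
    (hp0 : p x ≠ 0) (hH0 : H x ≠ 0) (hF0 : ∀ j ∈ J, F j (ψ j x) ≠ 0) :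
    logDeriv (fun b => p b * H b * ∏ j ∈ J, F j (ψ j b)) x =
      logDeriv p x + logDeriv H x + ∑ j ∈ J, logDeriv (F j) (ψ j x) * deriv (ψ j) x := by
  have hcomp : ∀ j ∈ J, DifferentiableAt 𝕜 (F j ∘ ψ j) x := fun j hj =>
    (hF j hj).comp x (hψ j hj)
  have hprod : logDeriv (fun b => ∏ j ∈ J, F j (ψ j b)) x =
      ∑ j ∈ J, logDeriv (F j) (ψ j x) * deriv (ψ j) x :=
    (logDeriv_prod hF0 hcomp).trans <|
      sum_congr rfl fun j hj => logDeriv_comp (hF j hj) (hψ j hj)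
  rw [logDeriv_mul (f := fun b => p b * H b) (g := fun b => ∏ j ∈ J, F j (ψ j b)) x
      (mul_ne_zero hp0 hH0) (prod_ne_zero_iff.mpr hF0) (hp.mul hH) (.fun_finsetProd hcomp),
    logDeriv_mul x hp0 hH0 hp hH]
  exact congrArg _ hprod

/-- First-order condition of Proposition 1: at an interior local maximum of the
expected utility `U(b) = (s - b) * q(b)` with selling probability
`q(b) = p(b) * H(b) * ∏ j ∈ J, F j (ψ j b)`, we have `s ≠ b⋆` and
`1/(s - b⋆) = p'(b⋆)/p(b⋆) + H'(b⋆)/H(b⋆) + Σ_j F_j'(ψ_j(b⋆))ψ_j'(b⋆)/F_j(ψ_j(b⋆))`. -/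
theorem stmt0 {ι : Type*} (J : Finset ι) (s bstar : ℝ)
    (p H : ℝ → ℝ) (F ψ : ι → ℝ → ℝ)
    (hp : DifferentiableAt ℝ p bstar) (hH : DifferentiableAt ℝ H bstar)
    (hψ : ∀ j ∈ J, DifferentiableAt ℝ (ψ j) bstar)
    (hF : ∀ j ∈ J, DifferentiableAt ℝ (F j) (ψ j bstar))
    (hp0 : 0 < p bstar) (hH0 : 0 < H bstar)
    (hF0 : ∀ j ∈ J, 0 < F j (ψ j bstar))
    (hmax : IsLocalMax
      (fun b => (s - b) * (p b * H b * ∏ j ∈ J, F j (ψ j b))) bstar) :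
    s ≠ bstar ∧
      1 / (s - bstar) =
        deriv p bstar / p bstar + deriv H bstar / H bstar +
          ∑ j ∈ J, deriv (F j) (ψ j bstar) * deriv (ψ j) bstar / F j (ψ j bstar) := by
  have hq : DifferentiableAt ℝ (fun b => p b * H b * ∏ j ∈ J, F j (ψ j b)) bstar :=
    (hp.mul hH).mul (.fun_finsetProd fun j hj => (hF j hj).comp bstar (hψ j hj))
  have hq0 : p bstar * H bstar * ∏ j ∈ J, F j (ψ j bstar) ≠ 0 :=
    (mul_pos (mul_pos hp0 hH0) (prod_pos hF0)).ne'
  obtain ⟨hne, hfoc⟩ := hmax.ne_and_one_div_sub_eq_logDeriv hq hq0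
  refine ⟨hne, ?_⟩
  rw [hfoc, logDeriv_mul_mul_prod_comp hp hH hψ hF hp0.ne' hH0.ne' fun j hj => (hF0 j hj).ne']
  simp only [logDeriv_apply, div_mul_eq_mul_div]
end

section
/- Let C be a finite index set with n = |C| ≥ 2 and let b be a real number. For each c ∈ C let s_c, d_c, P_c, G_c and R be real numbers with s_c ≠ b and G_c ≠ 0, and suppose the first-order-condition system holds: for every c ∈ C, 1/(s_c − b) = P_c + R + Σ_{j∈C, j≠c} G_j · d_j. Then for every c ∈ C, d_c = (1/(n − 1)) · (1/G_c) · [ Σ_{j≠c} ( 1/(s_j − b) − P_j ) − (n − 2) · ( 1/(s_c − b) − P_c ) − R ]. -/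
open Finset

/-- Algebraic content of Proposition 2: solving the first-order-condition system
`1/(s_c - b) = P_c + R + Σ_{j ≠ c} G_j d_j` for the derivatives `d_c`. -/
theorem stmt2 {ι : Type*} [DecidableEq ι] (C : Finset ι) (hn : 2 ≤ C.card)
    (b : ℝ) (s d P G : ι → ℝ) (R : ℝ)
    (hs : ∀ c ∈ C, s c ≠ b) (hG : ∀ c ∈ C, G c ≠ 0)
    (hfoc : ∀ c ∈ C, 1 / (s c - b) = P c + R + ∑ j ∈ C.erase c, G j * d j) :
    ∀ c ∈ C,
      d c = (1 / ((C.card : ℝ) - 1)) * (1 / G c) *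
        ((∑ j ∈ C.erase c, (1 / (s j - b) - P j)) -
          ((C.card : ℝ) - 2) * (1 / (s c - b) - P c) - R) := by
  intro c hc
  have hn2 : (2:ℝ) ≤ (C.card : ℝ) := by exact_mod_cast hn
  have hne : (C.card : ℝ) - 1 ≠ 0 := by linarith
  set T : ℝ := ∑ j ∈ C, G j * d j with hT
  set S : ℝ := ∑ j ∈ C, (1 / (s j - b) - P j) with hS
  have key : ∀ j ∈ C, G j * d j = T - (1 / (s j - b) - P j) + R := by
    intro j hj
    have h := hfoc j hj
    have hsum : ∑ k ∈ C.erase j, G k * d k = T - G j * d j := by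
      rw [hT, ← Finset.sum_erase_add C _ hj]; ring
    rw [hsum] at h
    linarith
  have hST : S - (C.card : ℝ) * R = ((C.card : ℝ) - 1) * T := by
    have h1 : T = ∑ j ∈ C, (T - (1 / (s j - b) - P j) + R) := by
      rw [hT]; exact Finset.sum_congr rfl key
    rw [Finset.sum_add_distrib, Finset.sum_sub_distrib, Finset.sum_const,
      Finset.sum_const, nsmul_eq_mul, nsmul_eq_mul, ← hS] at h1
    linarith
  have herase : ∑ j ∈ C.erase c, (1 / (s j - b) - P j)
      = S - (1 / (s c - b) - P c) := by
    rw [hS, ← Finset.sum_erase_add C _ hc]; ring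
  have hkc := key c hc
  have hGc := hG c hc
  rw [herase]
  field_simp
  linear_combination ((C.card : ℝ) - 1) * hkc - hST
end

section
/- Let C be a finite index set with n = |C| ≥ 2 and let b, τ be real numbers. Let h(b), H(b), H(τ) be real numbers with H(b) > H(τ), and for each c ∈ C let s_c, d_c, P_c be real numbers with s_c ≠ b, together with real numbers F_c(s_c), F_c(s̲_c), f_c(s_c) satisfying F_c(s_c) > F_c(s̲_c) and f_c(s_c) ≠ 0. Suppose the round-r truncated first-order-condition system holds: for every c ∈ C, 1/(s_c − b) = P_c + h(b)/(H(b) − H(τ)) + Σ_{j≠c} [ f_j(s_j)/(F_j(s_j) − F_j(s̲_j)) ] · d_j. Then for every c ∈ C, d_c = (1/(n − 1)) · [ (F_c(s_c) − F_c(s̲_c)) / f_c(s_c) ] · [ Σ_{j≠c} ( 1/(s_j − b) − P_j ) − (n − 2) · ( 1/(s_c − b) − P_c ) − h(b)/(H(b) − H(τ)) ]. -/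
open Finset

/-!
Write `K = h(b)/(H(b) − H(τ))`, `A_c = 1/(s_c − b) − P_c − K` and `g_j = f_j/(F_j − F̲_j) · d_j`.
The first-order conditions say `A_c = ∑_{j ≠ c} g_j = S − g_c` with `S = ∑_j g_j`; summing over
`c` gives `∑_c A_c = (n − 1) S`, so `g_c = S − A_c` is determined as soon as `n ≠ 1`, and `d_c`
is recovered from `g_c` by dividing by the nonzero hazard `f_c/(F_c − F̲_c)`.
-/

section LeaveOneOutSystem

variable {ι K : Type*} [DecidableEq ι] [Field K] {C : Finset ι} {g A : ι → K}

theorem Finset.sum_eq_card_sub_one_mul_sum_of_forall_eq_sum_erase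
    (h : ∀ c ∈ C, A c = ∑ j ∈ C.erase c, g j) :
    ∑ c ∈ C, A c = ((C.card : K) - 1) * ∑ j ∈ C, g j := by
  calc ∑ c ∈ C, A c = ∑ c ∈ C, (∑ j ∈ C, g j - g c) :=
        sum_congr rfl fun c hc => (h c hc).trans (sum_erase_eq_sub hc)
    _ = ((C.card : K) - 1) * ∑ j ∈ C, g j := by
        rw [sum_sub_distrib, sum_const, nsmul_eq_mul]; ring

theorem Finset.eq_div_of_forall_eq_sum_erase (hn : (C.card : K) - 1 ≠ 0)
    (h : ∀ c ∈ C, A c = ∑ j ∈ C.erase c, g j) {c : ι} (hc : c ∈ C) :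
    g c = (∑ j ∈ C.erase c, A j - ((C.card : K) - 2) * A c) / ((C.card : K) - 1) := by
  have hsum := sum_eq_card_sub_one_mul_sum_of_forall_eq_sum_erase h
  have hgc : g c = ∑ j ∈ C, g j - A c := by rw [h c hc, sum_erase_eq_sub hc]; ring
  rw [eq_div_iff hn, sum_erase_eq_sub hc, hsum, hgc]
  ring

end LeaveOneOutSystem

/-- Here `hb = h(b)`, `Hb = H(b)`, `Hτ = H(τ)` for the reserve distribution,
`s c = ψ_c(b)`, `d c = ψ_c'(b)`, `P c = p_c'(b)/p_c(b)`,
`Fs c = F_c(ψ_c(b))`, `Fl c = F_c(s̲_c)` and `fs c = f_c(ψ_c(b))`. -/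
theorem stmt7_general {ι : Type*} [DecidableEq ι] (C : Finset ι) (hn : 2 ≤ C.card)
    (b : ℝ) (hb Hb Hτ : ℝ)
    (s d P : ι → ℝ) (Fs Fl fs : ι → ℝ)
    (hF : ∀ c ∈ C, Fs c > Fl c) (hf : ∀ c ∈ C, fs c ≠ 0)
    (hfoc : ∀ c ∈ C, 1 / (s c - b) =
      P c + hb / (Hb - Hτ) + ∑ j ∈ C.erase c, fs j / (Fs j - Fl j) * d j) :
    ∀ c ∈ C,
      d c = (1 / ((C.card : ℝ) - 1)) * ((Fs c - Fl c) / fs c) *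
        ((∑ j ∈ C.erase c, (1 / (s j - b) - P j)) -
          ((C.card : ℝ) - 2) * (1 / (s c - b) - P c) - hb / (Hb - Hτ)) := by
  intro c hc
  set K := hb / (Hb - Hτ)
  set B : ι → ℝ := fun j => 1 / (s j - b) - P j
  have hn1 : (C.card : ℝ) - 1 ≠ 0 := by
    have : (2 : ℝ) ≤ C.card := by exact_mod_cast hn
    linarith
  have hgc := Finset.eq_div_of_forall_eq_sum_erase (A := fun j => B j - K)
    hn1 (fun j hj => by simp only [B]; rw [hfoc j hj]; ring) hc
  have hsumK : ∑ j ∈ C.erase c, (B j - K) = ∑ j ∈ C.erase c, B j - (C.card - 1) * K := by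
    rw [sum_sub_distrib, sum_const, nsmul_eq_mul, card_erase_of_mem hc,
      Nat.cast_sub (card_pos.mpr ⟨c, hc⟩), Nat.cast_one]
  have hFc : Fs c - Fl c ≠ 0 := sub_ne_zero.mpr (hF c hc).ne'
  have hd : d c = (Fs c - Fl c) / fs c * (fs c / (Fs c - Fl c) * d c) := by
    field_simp [hf c hc]
  rw [hd, hgc, hsumK]
  field_simp
  ring

/-- Round-r equilibrium ODE system of the multi-round negotiation extension.
Here `hb = h(b)`, `Hb = H(b)`, `Hτ = H(τ)` for the reserve distribution,
`s c = ψ_c(b)`, `d c = ψ_c'(b)`, `P c = p_c'(b)/p_c(b)`,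
`Fs c = F_c(ψ_c(b))`, `Fl c = F_c(s̲_c)` and `fs c = f_c(ψ_c(b))`.
From the truncated first-order conditions we solve for the derivatives `d c`. -/
theorem stmt7 {ι : Type*} [DecidableEq ι] (C : Finset ι) (hn : 2 ≤ C.card)
    (b τ : ℝ) (hb Hb Hτ : ℝ) (hH : Hb > Hτ)
    (s d P : ι → ℝ) (Fs Fl fs : ι → ℝ)
    (hs : ∀ c ∈ C, s c ≠ b)
    (hF : ∀ c ∈ C, Fs c > Fl c) (hf : ∀ c ∈ C, fs c ≠ 0)
    (hfoc : ∀ c ∈ C, 1 / (s c - b) =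
      P c + hb / (Hb - Hτ) + ∑ j ∈ C.erase c, fs j / (Fs j - Fl j) * d j) :
    ∀ c ∈ C,
      d c = (1 / ((C.card : ℝ) - 1)) * ((Fs c - Fl c) / fs c) *
        ((∑ j ∈ C.erase c, (1 / (s j - b) - P j)) -
          ((C.card : ℝ) - 2) * (1 / (s c - b) - P c) - hb / (Hb - Hτ)) :=
  stmt7_general C hn b hb Hb Hτ s d P Fs Fl fs hF hf hfoc
end
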